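/- arXiv:0709.3703 — 4 statements merged into one kernel-verified Lean document; each statement's English description precedes it below -/
import Mathlib

section
/- For every natural number n and every complex number u, the n-th derivative of the entire function S satisfies |S⁽ⁿ⁾(u)| ≤ 2^{n+1}/(1+|u|) · e^{|Im u|}. -/
open Complex

/-- The entire extension of `z ↦ sin z / z`. -/
noncomputable def sincC (z : ℂ) : ℂ := if z = 0 then 1 else Complex.sin z / z

/-!
Since `S z = ½ ∫_{-1}^{1} e^{izt} dt`, differentiating under the integral gives
`S⁽ⁿ⁾(u) = ½ iⁿ ∫_{-1}^{1} tⁿ e^{iut} dt`, whose modulus is at most `e^{|Im u|}`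
(the integral is `complexMGF` of Lebesgue measure on `(-1, 1]` at `iu`, which supplies the
differentiation under the integral sign).
Integrating by parts against `d(e^{iut}) = iu e^{iut} dt` trades the factor `u` for boundary terms
and `n tⁿ⁻¹`, so `|u| |S⁽ⁿ⁾(u)| ≤ (n + 1) e^{|Im u|}`. Adding the two bounds,
`(1 + |u|) |S⁽ⁿ⁾(u)| ≤ (n + 2) e^{|Im u|} ≤ 2ⁿ⁺¹ e^{|Im u|}`.
-/

open MeasureTheory ProbabilityTheory Set intervalIntegral

lemma integrableExpSet_id_restrict_Ioc (a b : ℝ) :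
    integrableExpSet id (volume.restrict (Ioc a b)) = univ :=
  eq_univ_of_forall fun _ ↦
    (Continuous.integrableOn_Icc (by fun_prop)).mono_set Ioc_subset_Icc_self

lemma contDiff_complexMGF_id_restrict_Ioc (a b : ℝ) {n : WithTop ℕ∞} :
    ContDiff ℂ n (complexMGF id (volume.restrict (Ioc a b))) := by
  refine Differentiable.contDiff fun z ↦ (hasDerivAt_complexMGF ?_).differentiableAt
  simp [integrableExpSet_id_restrict_Ioc]

lemma iteratedDeriv_complexMGF_id_restrict_Ioc {a b : ℝ} (hab : a ≤ b) (n : ℕ) (z : ℂ) :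
    iteratedDeriv n (complexMGF id (volume.restrict (Ioc a b))) z =
      ∫ t in a..b, (t : ℂ) ^ n * cexp (z * t) := by
  rw [iteratedDeriv_complexMGF (by simp [integrableExpSet_id_restrict_Ioc]), integral_of_le hab]
  rfl

lemma sincC_eq_complexMGF (z : ℂ) :
    sincC z = complexMGF id (volume.restrict (Ioc (-1) 1)) (I * z) / 2 := by
  rw [complexMGF, ← integral_of_le (by norm_num)]
  rcases eq_or_ne z 0 with rfl | hz
  · simp [sincC]
  · simp only [id_eq]
    rw [sincC, if_neg hz, integral_exp_mul_complex (mul_ne_zero I_ne_zero hz), ofReal_one,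
      mul_one, ofReal_neg, ofReal_one, mul_neg_one, ← two_sinh, mul_comm I z, sinh_mul_I]
    field_simp

lemma iteratedDeriv_sincC (n : ℕ) (z : ℂ) :
    iteratedDeriv n sincC z =
      I ^ n * (∫ t in (-1 : ℝ)..1, (t : ℂ) ^ n * cexp (I * z * t)) / 2 := by
  rw [funext sincC_eq_complexMGF, iteratedDeriv_div_const,
    iteratedDeriv_comp_const_mul (contDiff_complexMGF_id_restrict_Ioc _ _)]
  beta_reduce
  rw [iteratedDeriv_complexMGF_id_restrict_Ioc (by norm_num)]

lemma abs_le_of_mem_uIoc_neg {a t : ℝ} (ha : 0 ≤ a) (ht : t ∈ uIoc (-a) a) : |t| ≤ a := by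
  rw [uIoc_of_le (by linarith)] at ht
  exact abs_le.2 ⟨ht.1.le, ht.2⟩

lemma norm_cexp_mul_ofReal_le (c : ℂ) {t : ℝ} (ht : |t| ≤ 1) :
    ‖cexp (c * t)‖ ≤ Real.exp |c.re| := by
  rw [norm_exp, re_mul_ofReal, Real.exp_le_exp]
  calc c.re * t ≤ |c.re * t| := le_abs_self _
    _ = |c.re| * |t| := abs_mul _ _
    _ ≤ |c.re| := mul_le_of_le_one_right (abs_nonneg _) ht

lemma norm_pow_mul_cexp_mul_ofReal_le (n : ℕ) (c : ℂ) {t : ℝ} (ht : |t| ≤ 1) :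
    ‖(t : ℂ) ^ n * cexp (c * t)‖ ≤ Real.exp |c.re| := by
  rw [norm_mul, norm_pow, norm_real, Real.norm_eq_abs]
  exact (mul_le_of_le_one_left (norm_nonneg _) (pow_le_one₀ (abs_nonneg t) ht)).trans
    (norm_cexp_mul_ofReal_le c ht)

lemma norm_integral_pow_mul_cexp_le (n : ℕ) (c : ℂ) :
    ‖∫ t in (-1 : ℝ)..1, (t : ℂ) ^ n * cexp (c * t)‖ ≤ 2 * Real.exp |c.re| := by
  have h := norm_integral_le_of_norm_le_const fun t ht ↦
    norm_pow_mul_cexp_mul_ofReal_le n c (abs_le_of_mem_uIoc_neg zero_le_one ht)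
  norm_num at h
  linarith

lemma mul_integral_pow_mul_cexp (n : ℕ) (c : ℂ) :
    c * ∫ t in (-1 : ℝ)..1, (t : ℂ) ^ n * cexp (c * t) =
      cexp c - (-1) ^ n * cexp (-c) - n * ∫ t in (-1 : ℝ)..1, (t : ℂ) ^ (n - 1) * cexp (c * t) := by
  have hu (t : ℝ) : HasDerivAt (fun t : ℝ ↦ (t : ℂ) ^ n) (n * (t : ℂ) ^ (n - 1)) t :=
    (hasDerivAt_pow n (t : ℂ)).comp_ofReal
  have hv (t : ℝ) : HasDerivAt (fun t : ℝ ↦ cexp (c * t)) (c * cexp (c * t)) t := by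
    simpa [mul_comm] using (hasDerivAt_mul_const c).cexp.comp_ofReal (z := t)
  calc c * ∫ t in (-1 : ℝ)..1, (t : ℂ) ^ n * cexp (c * t)
      = ∫ t in (-1 : ℝ)..1, (t : ℂ) ^ n * (c * cexp (c * t)) := by
        rw [← intervalIntegral.integral_const_mul]; congr with t; ring
    _ = _ := integral_mul_deriv_eq_deriv_mul (fun t _ ↦ hu t) (fun t _ ↦ hv t)
        (by apply Continuous.intervalIntegrable; fun_prop)
        (by apply Continuous.intervalIntegrable; fun_prop)
    _ = _ := by simp [← intervalIntegral.integral_const_mul, mul_assoc]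

lemma norm_mul_integral_pow_mul_cexp_le (n : ℕ) (c : ℂ) :
    ‖c * ∫ t in (-1 : ℝ)..1, (t : ℂ) ^ n * cexp (c * t)‖ ≤ 2 * (n + 1) * Real.exp |c.re| := by
  have h₁ : ‖cexp c‖ ≤ Real.exp |c.re| := by
    simpa using norm_cexp_mul_ofReal_le c (t := 1) (by simp)
  have h₂ : ‖(-1) ^ n * cexp (-c)‖ ≤ Real.exp |c.re| := by
    simpa using norm_cexp_mul_ofReal_le c (t := -1) (by simp)
  have h₃ : ‖(n : ℂ) * ∫ t in (-1 : ℝ)..1, (t : ℂ) ^ (n - 1) * cexp (c * t)‖ ≤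
      n * (2 * Real.exp |c.re|) := by
    rw [norm_mul, norm_natCast]
    exact mul_le_mul_of_nonneg_left (norm_integral_pow_mul_cexp_le _ c) n.cast_nonneg
  rw [mul_integral_pow_mul_cexp]
  calc _ ≤ ‖cexp c‖ + ‖(-1) ^ n * cexp (-c)‖ +
        ‖(n : ℂ) * ∫ t in (-1 : ℝ)..1, (t : ℂ) ^ (n - 1) * cexp (c * t)‖ :=
        norm_sub_le_of_le (norm_sub_le _ _) le_rfl
    _ ≤ _ := by linarith

theorem stmt0 (n : ℕ) (u : ℂ) :
    ‖iteratedDeriv n sincC u‖ ≤ 2 ^ (n + 1) / (1 + ‖u‖) * Real.exp |u.im| := by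
  set M := ∫ t in (-1 : ℝ)..1, (t : ℂ) ^ n * cexp (I * u * t)
  have hre : |(I * u).re| = |u.im| := by simp
  have hM : ‖M‖ ≤ 2 * Real.exp |u.im| := hre ▸ norm_integral_pow_mul_cexp_le n (I * u)
  have huM : ‖u‖ * ‖M‖ ≤ 2 * (n + 1) * Real.exp |u.im| := by
    simpa [hre] using norm_mul_integral_pow_mul_cexp_le n (I * u)
  have hpow : (n : ℝ) + 2 ≤ 2 ^ (n + 1) := by
    have := one_add_mul_le_pow (a := (1 : ℝ)) (by norm_num) (n + 1)
    norm_num at this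
    linarith
  rw [iteratedDeriv_sincC, norm_div, norm_mul, norm_pow, norm_I, one_pow, one_mul,
    RCLike.norm_ofNat, div_mul_eq_mul_div, le_div_iff₀ (by positivity)]
  calc ‖M‖ / 2 * (1 + ‖u‖) = (‖M‖ + ‖u‖ * ‖M‖) / 2 := by ring
    _ ≤ (2 * Real.exp |u.im| + 2 * (n + 1) * Real.exp |u.im|) / 2 := by gcongr
    _ = (n + 2) * Real.exp |u.im| := by ring
    _ ≤ 2 ^ (n + 1) * Real.exp |u.im| := by gcongr
end

section
/- For every natural number n there exists a constant C(n) > 0 such that for all complex ω ≠ 0 and all reals v ≥ u > 0, the n-th derivative in ω of the entire function ω ↦ (u−v)·S(ω(u−v)) satisfies |∂_ω^n[(u−v)·S(ω(u−v))]| ≤ C(n)·v^{n+1}/(1+|ωv|) · e^{v·|Im ω| + u·Im ω}. -/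
/-!
Since `ζ * sincC ζ = sin ζ` and `‖sin ζ‖, ‖cos ζ‖ ≤ exp |Im ζ|` (the former also `≤ ‖ζ‖ exp |Im ζ|`
by the mean value inequality), `‖sincC ζ‖ (1 + ‖ζ‖) ≤ 2 exp |Im ζ|`. Hence for `|a| ≤ v` the kernel
`K w = a · sincC (w a)` satisfies `‖K z‖ (1 + v‖z‖) ≤ 2v exp (|a| |Im z|)`, so on the circle
`‖z - ω‖ = 1/v` it is at most `4e v exp (|a| |Im ω|) / (1 + v‖ω‖)`. Cauchy's estimate on that circle
gives the bound with `C = 4e n!`, and `(v - u) |Im ω| ≤ v |Im ω| + u Im ω`.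
-/

open Complex

open Metric

lemma Complex.norm_cos_le_exp_abs_im (z : ℂ) : ‖cos z‖ ≤ Real.exp |z.im| := by
  have h₁ : Real.exp z.im ≤ Real.exp |z.im| := Real.exp_le_exp.2 (le_abs_self _)
  have h₂ : Real.exp (-z.im) ≤ Real.exp |z.im| := Real.exp_le_exp.2 (neg_le_abs _)
  calc ‖cos z‖ = ‖exp (z * I) + exp (-z * I)‖ / 2 := by simp [cos]
    _ ≤ (‖exp (z * I)‖ + ‖exp (-z * I)‖) / 2 := by gcongr; exact norm_add_le _ _
    _ = (Real.exp (-z.im) + Real.exp z.im) / 2 := by simp [norm_exp]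
    _ ≤ Real.exp |z.im| := by linarith

lemma Complex.norm_sin_le_exp_abs_im (z : ℂ) : ‖sin z‖ ≤ Real.exp |z.im| := by
  simpa [← cos_pi_div_two_sub] using norm_cos_le_exp_abs_im (Real.pi / 2 - z)

lemma Complex.norm_sin_le_norm_mul_exp_abs_im (z : ℂ) : ‖sin z‖ ≤ ‖z‖ * Real.exp |z.im| := by
  set strip : Set ℂ := im ⁻¹' Set.Icc (-|z.im|) |z.im|
  have hconv : Convex ℝ strip := (convex_Icc _ _).linear_preimage imLm
  have hcos : ∀ w ∈ strip, ‖deriv sin w‖ ≤ Real.exp |z.im| := fun w hw => by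
    rw [deriv_sin]
    exact (norm_cos_le_exp_abs_im w).trans (Real.exp_le_exp.2 (abs_le.2 hw))
  simpa [mul_comm] using hconv.norm_image_sub_le_of_norm_deriv_le (x := 0) (y := z)
    (fun w _ => differentiableAt_sin) hcos (by simp [strip])
    (by simp [strip, neg_abs_le, le_abs_self])

lemma mul_sincC (z : ℂ) : z * sincC z = sin z := by
  by_cases hz : z = 0
  · simp [hz]
  · rw [sincC, if_neg hz, mul_div_cancel₀ _ hz]

lemma sincC_eq_dslope : sincC = dslope sin 0 := by
  funext z
  by_cases hz : z = 0
  · simp [hz, sincC]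
  · rw [sincC, if_neg hz, dslope_of_ne _ hz, slope_def_field]
    simp

lemma differentiable_sincC : Differentiable ℂ sincC := by
  rw [sincC_eq_dslope, ← differentiableOn_univ]
  exact (Complex.differentiableOn_dslope Filter.univ_mem).2 differentiable_sin.differentiableOn

lemma norm_sincC_le_exp_abs_im (z : ℂ) : ‖sincC z‖ ≤ Real.exp |z.im| := by
  by_cases hz : z = 0
  · simp [hz, sincC]
  · rw [sincC, if_neg hz, norm_div, div_le_iff₀ (norm_pos_iff.2 hz), mul_comm]
    exact norm_sin_le_norm_mul_exp_abs_im z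

lemma norm_mul_norm_sincC_le_exp_abs_im (z : ℂ) : ‖z‖ * ‖sincC z‖ ≤ Real.exp |z.im| := by
  rw [← norm_mul, mul_sincC]
  exact norm_sin_le_exp_abs_im z

lemma norm_ofReal_mul_sincC_mul_le {a v : ℝ} (hav : |a| ≤ v) (z : ℂ) :
    ‖(a : ℂ) * sincC (z * a)‖ * (1 + ‖z‖ * v) ≤ 2 * v * Real.exp (|a| * |z.im|) := by
  have him : |(z * a).im| = |a| * |z.im| := by simp [abs_mul, mul_comm]
  have h₁ := norm_sincC_le_exp_abs_im (z * a)
  have h₂ := norm_mul_norm_sincC_le_exp_abs_im (z * a)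
  rw [him] at h₁ h₂
  rw [norm_mul, norm_real, Real.norm_eq_abs] at h₂ ⊢
  have hv : 0 ≤ v := (abs_nonneg a).trans hav
  calc |a| * ‖sincC (z * a)‖ * (1 + ‖z‖ * v)
      = |a| * ‖sincC (z * a)‖ + v * (‖z‖ * |a| * ‖sincC (z * a)‖) := by ring
    _ ≤ v * Real.exp (|a| * |z.im|) + v * Real.exp (|a| * |z.im|) :=
      add_le_add (mul_le_mul hav h₁ (norm_nonneg _) hv) (mul_le_mul_of_nonneg_left h₂ hv)
    _ = 2 * v * Real.exp (|a| * |z.im|) := by ring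

lemma norm_ofReal_mul_sincC_mul_le_of_mem_sphere {a v : ℝ} (hv : 0 < v) (hav : |a| ≤ v)
    {ω z : ℂ} (hz : z ∈ sphere ω (1 / v)) :
    ‖(a : ℂ) * sincC (z * a)‖
      ≤ 4 * Real.exp 1 * v * Real.exp (|a| * |ω.im|) / (1 + ‖ω‖ * v) := by
  have hzω : ‖z - ω‖ * v = 1 := by
    rw [mem_sphere_iff_norm.1 hz, one_div_mul_cancel hv.ne']
  have hnorm : 1 + ‖ω‖ * v ≤ 2 * (1 + ‖z‖ * v) := by
    have hωz : ‖ω‖ ≤ ‖z‖ + ‖z - ω‖ := by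
      simpa [norm_sub_rev, add_comm] using norm_sub_norm_le ω z
    nlinarith [mul_le_mul_of_nonneg_right hωz hv.le, mul_nonneg (norm_nonneg z) hv.le]
  have him : |a| * |z.im| ≤ |a| * |ω.im| + 1 := by
    have hzim : |z.im| ≤ |ω.im| + ‖z - ω‖ := by
      have h₁ := abs_im_le_norm (z - ω)
      have h₂ := abs_sub_abs_le_abs_sub z.im ω.im
      rw [sub_im] at h₁
      linarith
    nlinarith [mul_le_mul_of_nonneg_left hzim (abs_nonneg a),
      mul_le_mul_of_nonneg_right hav (norm_nonneg (z - ω))]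
  rw [le_div_iff₀ (by positivity)]
  calc ‖(a : ℂ) * sincC (z * a)‖ * (1 + ‖ω‖ * v)
      ≤ ‖(a : ℂ) * sincC (z * a)‖ * (2 * (1 + ‖z‖ * v)) := by gcongr
    _ = 2 * (‖(a : ℂ) * sincC (z * a)‖ * (1 + ‖z‖ * v)) := by ring
    _ ≤ 2 * (2 * v * Real.exp (|a| * |z.im|)) :=
      mul_le_mul_of_nonneg_left (norm_ofReal_mul_sincC_mul_le hav z) zero_le_two
    _ ≤ 2 * (2 * v * Real.exp (|a| * |ω.im| + 1)) := by gcongr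
    _ = 4 * Real.exp 1 * v * Real.exp (|a| * |ω.im|) := by rw [Real.exp_add]; ring

theorem stmt1 (n : ℕ) :
    ∃ C : ℝ, 0 < C ∧ ∀ (ω : ℂ), ω ≠ 0 → ∀ u v : ℝ, 0 < u → u ≤ v →
      ‖iteratedDeriv n (fun w : ℂ => ((u : ℂ) - (v : ℂ)) * sincC (w * ((u : ℂ) - (v : ℂ)))) ω‖
        ≤ C * v ^ (n + 1) / (1 + ‖ω‖ * v) * Real.exp (v * |ω.im| + u * ω.im) := by
  refine ⟨4 * Real.exp 1 * n.factorial, by positivity, fun ω _ u v hu huv => ?_⟩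
  have hv : 0 < v := hu.trans_le huv
  have hav : |u - v| ≤ v := by rw [abs_of_nonpos (by linarith)]; linarith
  have hexp : |u - v| * |ω.im| ≤ v * |ω.im| + u * ω.im := by
    rw [abs_of_nonpos (by linarith)]
    nlinarith [neg_abs_le ω.im]
  have hdiff : Differentiable ℂ fun w : ℂ => ((u - v : ℝ) : ℂ) * sincC (w * (u - v : ℝ)) :=
    (differentiable_sincC.comp (differentiable_id.mul_const _)).const_mul _
  have hcauchy := norm_iteratedDeriv_le_of_forall_mem_sphere_norm_le (c := ω) n (one_div_pos.2 hv)
    hdiff.diffContOnCl fun z hz => norm_ofReal_mul_sincC_mul_le_of_mem_sphere hv hav hz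
  push_cast at hcauchy
  calc _ ≤ _ := hcauchy
    _ = 4 * Real.exp 1 * n.factorial * v ^ (n + 1) / (1 + ‖ω‖ * v)
          * Real.exp (|u - v| * |ω.im|) := by
      rw [one_div, inv_pow, div_inv_eq_mul, pow_succ]; ring
    _ ≤ _ := by gcongr
end

section
/- Let l ≥ 1 be an integer and define φ⁽⁰⁾_ω(u) = ω^l · e^{−iωu} · Σ_{k=0}^l ((l+k)!/(k!·(l−k)!)) · (2iωu)^{−k} for ω ∈ ℂ \ {0} and u > 0. There exist constants C₄, C₅ > 0 depending only on l such that for all ω ∈ ℂ \ {0} and all u > 0: |φ⁽⁰⁾_ω(u)| ≤ C₄·((1+|ω|u)/u)^l · e^{u·Im ω} and |∂_ω φ⁽⁰⁾_ω(u)| ≤ C₅·((1+|ω|u)/u)^l · u · e^{u·Im ω}, where ∂_ω is the complex derivative of the holomorphic function ω ↦ φ⁽⁰⁾_ω(u) on ℂ \ {0}. -/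
open Complex

/-- The initial function of the Jost iteration for angular mode `l ≥ 1`, via the closed
polynomial formula for the spherical Hankel function. -/
noncomputable def jostInit (l : ℕ) (ω : ℂ) (u : ℝ) : ℂ :=
  ω ^ l * Complex.exp (-Complex.I * ω * (u : ℂ)) *
    ∑ k ∈ Finset.range (l + 1),
      (((l + k).factorial : ℂ) / ((k.factorial : ℂ) * ((l - k).factorial : ℂ))) *
        (2 * Complex.I * ω * (u : ℂ)) ^ (-(k : ℤ))

/-!
Multiplying out, `jostInit l ω u = ∑ₖ cₖ (2iu)⁻ᵏ ω^(l-k) e^(-iωu)` is a finite sum of monomials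
times a plane wave, which is entire in `ω`. With `y = (1 + |ω|u)/u = u⁻¹ + |ω|` every monomial
`(2u)⁻ᵏ |ω|^(l-k)` is at most `y^l`, and `|e^(-iωu)| = e^(u Im ω)`. Differentiating a monomial
`ω^n e^(-iωu)` produces `n ω^(n-1)` and `u ω^n`; the first is brought to the scale `u y^l`
using `1 ≤ u y`.
-/

namespace JostInit

open Finset

section RealBounds

variable {a b : ℝ}

theorem pow_mul_pow_le_add_pow (ha : 0 ≤ a) (hb : 0 ≤ b) (k n : ℕ) :
    a ^ k * b ^ n ≤ (a + b) ^ (k + n) := by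
  rw [pow_add]
  gcongr <;> linarith

theorem inv_pow_mul_deriv_le {u : ℝ} (hu : 0 < u) (hb : 0 ≤ b) (k n : ℕ) :
    u⁻¹ ^ k * (n * b ^ (n - 1) + u * b ^ n) ≤ (n + 1) * u * (u⁻¹ + b) ^ (k + n) := by
  have hval := pow_mul_pow_le_add_pow (inv_nonneg.2 hu.le) hb k n
  have hlow : n * (u⁻¹ ^ k * b ^ (n - 1)) ≤ n * (u * (u⁻¹ + b) ^ (k + n)) := by
    rcases n with _ | m
    · simp
    refine mul_le_mul_of_nonneg_left ?_ (Nat.cast_nonneg _)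
    calc u⁻¹ ^ k * b ^ (m + 1 - 1)
        ≤ (u⁻¹ + b) ^ (k + m) := pow_mul_pow_le_add_pow (inv_nonneg.2 hu.le) hb k _
      _ = u * u⁻¹ * (u⁻¹ + b) ^ (k + m) := by rw [mul_inv_cancel₀ hu.ne', one_mul]
      _ ≤ u * (u⁻¹ + b) * (u⁻¹ + b) ^ (k + m) := by gcongr; linarith
      _ = u * (u⁻¹ + b) ^ (k + (m + 1)) := by ring
  calc u⁻¹ ^ k * (n * b ^ (n - 1) + u * b ^ n)
      = n * (u⁻¹ ^ k * b ^ (n - 1)) + u * (u⁻¹ ^ k * b ^ n) := by ring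
    _ ≤ n * (u * (u⁻¹ + b) ^ (k + n)) + u * (u⁻¹ + b) ^ (k + n) := by gcongr
    _ = (n + 1) * u * (u⁻¹ + b) ^ (k + n) := by ring

end RealBounds

theorem norm_cexp_neg_I_mul (w : ℂ) (u : ℝ) :
    ‖cexp (-I * w * u)‖ = Real.exp (u * w.im) := by
  rw [norm_exp]
  congr 1
  simp [mul_re, mul_im, mul_comm]

theorem hasDerivAt_pow_mul_cexp (n : ℕ) (u : ℝ) (w : ℂ) :
    HasDerivAt (fun z : ℂ => z ^ n * cexp (-I * z * u))
      ((n * w ^ (n - 1) - I * u * w ^ n) * cexp (-I * w * u)) w := by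
  have hlin : HasDerivAt (fun z : ℂ => -I * z * u) (-I * u) w := by
    simpa using ((hasDerivAt_id w).const_mul (-I)).mul_const (u : ℂ)
  exact ((hasDerivAt_pow n w).fun_mul hlin.cexp).congr_deriv (by ring)

theorem norm_pow_mul_cexp (n : ℕ) (u : ℝ) (w : ℂ) :
    ‖w ^ n * cexp (-I * w * u)‖ = ‖w‖ ^ n * Real.exp (u * w.im) := by
  rw [norm_mul, norm_pow, norm_cexp_neg_I_mul]

theorem norm_deriv_pow_mul_cexp_le (n : ℕ) {u : ℝ} (hu : 0 ≤ u) (w : ℂ) :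
    ‖(n * w ^ (n - 1) - I * u * w ^ n) * cexp (-I * w * u)‖ ≤
      (n * ‖w‖ ^ (n - 1) + u * ‖w‖ ^ n) * Real.exp (u * w.im) := by
  rw [norm_mul, norm_cexp_neg_I_mul]
  gcongr
  refine (norm_sub_le _ _).trans_eq ?_
  simp [abs_of_nonneg hu]

theorem norm_two_I_mul_inv_pow_le {u : ℝ} (hu : 0 < u) (k : ℕ) :
    ‖(2 * I * u)⁻¹ ^ k‖ ≤ u⁻¹ ^ k := by
  rw [norm_pow, norm_inv]
  gcongr
  simp only [Complex.norm_mul, norm_ofNat, norm_I, mul_one, norm_real, Real.norm_eq_abs,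
    abs_of_pos hu]
  linarith

noncomputable def coeff (l k : ℕ) : ℝ :=
  (l + k).factorial / (k.factorial * (l - k).factorial)

theorem coeff_pos (l k : ℕ) : 0 < coeff l k := by
  unfold coeff
  positivity

theorem norm_sum_coeff_mul_le (l : ℕ) (f : ℕ → ℂ) {B : ℝ}
    (hf : ∀ k ∈ range (l + 1), ‖f k‖ ≤ B) :
    ‖∑ k ∈ range (l + 1), (coeff l k : ℂ) * f k‖ ≤ (∑ k ∈ range (l + 1), coeff l k) * B := by
  rw [sum_mul]
  refine (norm_sum_le _ _).trans (sum_le_sum fun k hk => ?_)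
  rw [norm_mul, norm_real, Real.norm_of_nonneg (coeff_pos l k).le]
  exact mul_le_mul_of_nonneg_left (hf k hk) (coeff_pos l k).le

noncomputable def entire (l : ℕ) (u : ℝ) (w : ℂ) : ℂ :=
  ∑ k ∈ range (l + 1), (coeff l k : ℂ) * ((2 * I * u)⁻¹ ^ k * (w ^ (l - k) * cexp (-I * w * u)))

noncomputable def entireDeriv (l : ℕ) (u : ℝ) (w : ℂ) : ℂ :=
  ∑ k ∈ range (l + 1), (coeff l k : ℂ) * ((2 * I * u)⁻¹ ^ k *
    (((l - k : ℕ) * w ^ (l - k - 1) - I * u * w ^ (l - k)) * cexp (-I * w * u)))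

theorem jostInit_eq_entire (l : ℕ) (u : ℝ) {ω : ℂ} (hω : ω ≠ 0) :
    jostInit l ω u = entire l u ω := by
  rw [jostInit, entire, mul_sum]
  refine sum_congr rfl fun k hk => ?_
  have hkl : k ≤ l := Nat.lt_succ_iff.mp (mem_range.mp hk)
  rw [show 2 * I * ω * u = 2 * I * u * ω by ring, mul_zpow, zpow_neg, zpow_neg, zpow_natCast,
    zpow_natCast, pow_sub₀ _ hω hkl, inv_pow, coeff]
  push_cast
  ring

theorem hasDerivAt_entire (l : ℕ) (u : ℝ) (w : ℂ) :
    HasDerivAt (entire l u) (entireDeriv l u w) w :=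
  HasDerivAt.fun_sum fun k _ =>
    ((hasDerivAt_pow_mul_cexp (l - k) u w).const_mul _).const_mul _

theorem norm_entire_le (l : ℕ) {u : ℝ} (hu : 0 < u) (w : ℂ) :
    ‖entire l u w‖ ≤
      (∑ k ∈ range (l + 1), coeff l k) * ((u⁻¹ + ‖w‖) ^ l * Real.exp (u * w.im)) := by
  refine norm_sum_coeff_mul_le l _ fun k hk => ?_
  have hkl : k + (l - k) = l := Nat.add_sub_cancel' (Nat.lt_succ_iff.mp (mem_range.mp hk))
  rw [norm_mul, norm_pow_mul_cexp, ← mul_assoc]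
  gcongr
  calc ‖(2 * I * u)⁻¹ ^ k‖ * ‖w‖ ^ (l - k)
      ≤ u⁻¹ ^ k * ‖w‖ ^ (l - k) := by gcongr; exact norm_two_I_mul_inv_pow_le hu k
    _ ≤ (u⁻¹ + ‖w‖) ^ l :=
      (pow_mul_pow_le_add_pow (inv_nonneg.2 hu.le) (norm_nonneg w) k (l - k)).trans_eq
        (by rw [hkl])

theorem norm_entireDeriv_le (l : ℕ) {u : ℝ} (hu : 0 < u) (w : ℂ) :
    ‖entireDeriv l u w‖ ≤ (∑ k ∈ range (l + 1), coeff l k) *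
      ((l + 1) * u * (u⁻¹ + ‖w‖) ^ l * Real.exp (u * w.im)) := by
  refine norm_sum_coeff_mul_le l _ fun k hk => ?_
  have hkl : k + (l - k) = l := Nat.add_sub_cancel' (Nat.lt_succ_iff.mp (mem_range.mp hk))
  rw [norm_mul]
  calc ‖(2 * I * u)⁻¹ ^ k‖ *
        ‖((l - k : ℕ) * w ^ (l - k - 1) - I * u * w ^ (l - k)) * cexp (-I * w * u)‖
      ≤ u⁻¹ ^ k * (((l - k : ℕ) * ‖w‖ ^ (l - k - 1) + u * ‖w‖ ^ (l - k)) *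
          Real.exp (u * w.im)) := by
        gcongr
        · exact norm_two_I_mul_inv_pow_le hu k
        · exact norm_deriv_pow_mul_cexp_le _ hu.le w
    _ ≤ ((l - k : ℕ) + 1) * u * (u⁻¹ + ‖w‖) ^ l * Real.exp (u * w.im) := by
        rw [← mul_assoc]
        refine mul_le_mul_of_nonneg_right ?_ (Real.exp_pos _).le
        exact (inv_pow_mul_deriv_le hu (norm_nonneg w) k (l - k)).trans_eq (by rw [hkl])
    _ ≤ (l + 1) * u * (u⁻¹ + ‖w‖) ^ l * Real.exp (u * w.im) := by
        gcongr
        exact_mod_cast Nat.sub_le l k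

end JostInit

open JostInit in
theorem stmt18_general (l : ℕ) :
    ∃ C₄ : ℝ, 0 < C₄ ∧ ∃ C₅ : ℝ, 0 < C₅ ∧
      ∀ ω : ℂ, ω ≠ 0 → ∀ u : ℝ, 0 < u →
        ‖jostInit l ω u‖ ≤ C₄ * ((1 + ‖ω‖ * u) / u) ^ l * Real.exp (u * ω.im) ∧
        ‖deriv (fun w : ℂ => jostInit l w u) ω‖
          ≤ C₅ * ((1 + ‖ω‖ * u) / u) ^ l * u * Real.exp (u * ω.im) := by
  set S := ∑ k ∈ Finset.range (l + 1), coeff l k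
  have hS : 0 < S := Finset.sum_pos (fun k _ => coeff_pos l k) Finset.nonempty_range_add_one
  refine ⟨S, hS, (l + 1) * S, by positivity, fun ω hω u hu => ?_⟩
  have hy : (1 + ‖ω‖ * u) / u = u⁻¹ + ‖ω‖ := by field_simp
  have hderiv : deriv (fun w : ℂ => jostInit l w u) ω = entireDeriv l u ω := by
    have heq : (fun w : ℂ => jostInit l w u) =ᶠ[nhds ω] entire l u :=
      (eventually_ne_nhds hω).mono fun w hw => jostInit_eq_entire l u hw
    rw [heq.deriv_eq, (hasDerivAt_entire l u ω).deriv]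
  rw [hy, hderiv, jostInit_eq_entire l u hω]
  constructor
  · linarith [norm_entire_le l hu ω]
  · linarith [norm_entireDeriv_le l hu ω]

theorem stmt18 (l : ℕ) (hl : 1 ≤ l) :
    ∃ C₄ : ℝ, 0 < C₄ ∧ ∃ C₅ : ℝ, 0 < C₅ ∧
      ∀ ω : ℂ, ω ≠ 0 → ∀ u : ℝ, 0 < u →
        ‖jostInit l ω u‖ ≤ C₄ * ((1 + ‖ω‖ * u) / u) ^ l * Real.exp (u * ω.im) ∧
        ‖deriv (fun w : ℂ => jostInit l w u) ω‖
          ≤ C₅ * ((1 + ‖ω‖ * u) / u) ^ l * u * Real.exp (u * ω.im) :=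
  stmt18_general l
end

section
/- There exists a constant c > 0 such that for every real t ≥ 1: |∫_{−1}^{1} log|ω| · e^{−iωt} dω| ≤ c/t. -/
/-!
Since `log |ω|` is even, the integral equals `2 ∫₀¹ log ω cos (ω t) dω`. Integrating by parts
against `sin (ω t) / t`, the antiderivative of `cos (ω t)` vanishing at `0` (which is what absorbs
the logarithmic singularity), turns this into `-(2 / t) ∫₀ᵗ sinc u du`. The sine integral is
bounded: `|sinc| ≤ 1` on `[0, 1]`, and a second integration by parts gives
`|∫ₐᵇ sin u / u du| ≤ 2 / a`.
-/

open MeasureTheory intervalIntegral Set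
open scoped Interval

theorem intervalIntegral.integral_neg_self_eq_integral_add_comp_neg {E : Type*}
    [NormedAddCommGroup E] [NormedSpace ℝ E] {f : ℝ → E} {a : ℝ}
    (hf : IntervalIntegrable f volume (-a) a) :
    ∫ x in -a..a, f x = ∫ x in 0..a, (f x + f (-x)) := by
  have h0 : (0 : ℝ) ∈ [[-a, a]] := by
    rcases le_total 0 a with h | h <;> simp [h]
  have hneg : IntervalIntegrable f volume (-a) 0 := hf.mono_set (uIcc_subset_uIcc_left h0)
  have hpos : IntervalIntegrable f volume 0 a := hf.mono_set (uIcc_subset_uIcc_right h0)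
  have hpos' : IntervalIntegrable (fun x ↦ f (-x)) volume 0 a := by
    simpa using (IntervalIntegrable.iff_comp_neg).mp hneg.symm
  rw [integral_add hpos hpos', integral_comp_neg, neg_zero, add_comm,
    integral_add_adjacent_intervals hneg hpos]

namespace Real

theorem sin_mul_div_eq_mul_sinc {x : ℝ} (hx : x ≠ 0) (t : ℝ) :
    sin (x * t) / x = t * sinc (x * t) := by
  rcases eq_or_ne t 0 with rfl | ht
  · simp
  · rw [sinc_of_ne_zero (mul_ne_zero hx ht)]
    field_simp

theorem sin_mul_mul_log_eq_mul_sinc (x t : ℝ) :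
    sin (x * t) * log x = t * sinc (x * t) * (x * log x) := by
  rcases eq_or_ne x 0 with rfl | hx
  · simp
  · rw [← sin_mul_div_eq_mul_sinc hx]
    field_simp

theorem mul_integral_log_mul_cos_eq_neg_integral_sinc (t : ℝ) :
    t * ∫ x in 0..1, log x * cos (x * t) = -∫ u in 0..t, sinc u := by
  have hcont : Continuous fun x ↦ sin (x * t) * log x := by
    simp_rw [sin_mul_mul_log_eq_mul_sinc]
    exact (continuous_const.mul (continuous_sinc.comp (by fun_prop))).mul continuous_mul_log
  have hderiv : ∀ x ∈ Ioo (0 : ℝ) 1, HasDerivAt (fun x ↦ sin (x * t) * log x)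
      (t * (log x * cos (x * t)) + t * sinc (x * t)) x := by
    intro x hx
    have h := ((hasDerivAt_mul_const t).sin).mul (hasDerivAt_log hx.1.ne')
    refine h.congr_deriv ?_
    rw [← sin_mul_div_eq_mul_sinc hx.1.ne']
    ring
  have hint₁ : IntervalIntegrable (fun x ↦ log x * cos (x * t)) volume 0 1 :=
    intervalIntegrable_log'.mul_continuousOn (by fun_prop)
  have hint₂ : IntervalIntegrable (fun x ↦ sinc (x * t)) volume 0 1 :=
    (continuous_sinc.comp (continuous_mul_const t)).intervalIntegrable 0 1
  have hftc := integral_eq_sub_of_hasDerivAt_of_le zero_le_one hcont.continuousOn hderiv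
    ((hint₁.const_mul t).add (hint₂.const_mul t))
  rw [integral_add (hint₁.const_mul t) (hint₂.const_mul t), intervalIntegral.integral_const_mul,
    intervalIntegral.integral_const_mul, mul_integral_comp_mul_right] at hftc
  simp only [zero_mul, one_mul, log_one, log_zero, mul_zero, sub_zero] at hftc
  linarith

theorem abs_integral_sin_div_le {a b : ℝ} (ha : 0 < a) (hab : a ≤ b) :
    |∫ u in a..b, sin u / u| ≤ 2 / a := by
  have hne : ∀ x ∈ [[a, b]], x ≠ 0 := by
    rw [uIcc_of_le hab]
    exact fun x hx ↦ (ha.trans_le hx.1).ne'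
  have hinv : ∀ x ∈ [[a, b]], HasDerivAt (fun x ↦ x⁻¹) (-(x ^ 2)⁻¹) x :=
    fun x hx ↦ hasDerivAt_inv (hne x hx)
  have hcos : ∀ x ∈ [[a, b]], HasDerivAt (fun x ↦ -cos x) (sin x) x :=
    fun x _ ↦ by simpa using (hasDerivAt_cos x).fun_neg
  have hsq : IntervalIntegrable (fun x ↦ (x ^ 2)⁻¹) volume a b :=
    ((continuousOn_pow 2).inv₀ fun x hx ↦ pow_ne_zero 2 (hne x hx)).intervalIntegrable
  have hparts := integral_mul_deriv_eq_deriv_mul hinv hcos hsq.neg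
    (continuous_sin.intervalIntegrable a b)
  have htail : ∫ x in a..b, (x ^ 2)⁻¹ = a⁻¹ - b⁻¹ := by
    rw [integral_eq_sub_of_hasDerivAt (f := fun x ↦ -x⁻¹) (fun x hx ↦ by
      simpa using (hinv x hx).fun_neg) hsq]
    ring
  have hrem : |∫ x in a..b, -(x ^ 2)⁻¹ * -cos x| ≤ a⁻¹ - b⁻¹ := by
    rw [← htail, ← norm_eq_abs]
    refine norm_integral_le_of_norm_le hab (.of_forall fun x _ ↦ ?_) hsq
    rw [neg_mul_neg, norm_mul, norm_inv, norm_pow, norm_eq_abs, sq_abs]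
    exact mul_le_of_le_one_right (by positivity) (abs_cos_le_one x)
  have hbdry : ∀ c, 0 < c → |c⁻¹ * -cos c| ≤ c⁻¹ := fun c hc ↦ by
    rw [abs_mul, abs_neg, abs_inv, abs_of_pos hc]
    exact mul_le_of_le_one_right (by positivity) (abs_cos_le_one c)
  simp_rw [div_eq_inv_mul (sin _), hparts]
  calc |b⁻¹ * -cos b - a⁻¹ * -cos a - ∫ x in a..b, -(x ^ 2)⁻¹ * -cos x|
      ≤ |b⁻¹ * -cos b| + |a⁻¹ * -cos a| + |∫ x in a..b, -(x ^ 2)⁻¹ * -cos x| :=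
        (abs_sub _ _).trans (add_le_add_left (abs_sub _ _) _)
    _ ≤ b⁻¹ + a⁻¹ + (a⁻¹ - b⁻¹) :=
        add_le_add (add_le_add (hbdry b (ha.trans_le hab)) (hbdry a ha)) hrem
    _ = 2 / a := by ring

theorem abs_integral_sinc_le_three {T : ℝ} (hT : 1 ≤ T) : |∫ u in 0..T, sinc u| ≤ 3 := by
  have hint : ∀ a b : ℝ, IntervalIntegrable sinc volume a b := continuous_sinc.intervalIntegrable
  have hhead : |∫ u in 0..1, sinc u| ≤ 1 := by
    simpa using norm_integral_le_of_norm_le_const (a := 0) (b := 1) (C := 1)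
      fun x _ ↦ (norm_eq_abs _).trans_le (abs_sinc_le_one x)
  have htail : ∫ u in 1..T, sinc u = ∫ u in 1..T, sin u / u :=
    integral_congr fun u hu ↦ sinc_of_ne_zero
      (zero_lt_one.trans_le (uIcc_of_le hT ▸ hu).1).ne'
  rw [← integral_add_adjacent_intervals (hint 0 1) (hint 1 T), htail]
  calc |(∫ u in 0..1, sinc u) + ∫ u in 1..T, sin u / u|
      ≤ |∫ u in 0..1, sinc u| + |∫ u in 1..T, sin u / u| := abs_add_le _ _
    _ ≤ 1 + 2 / 1 := add_le_add hhead (abs_integral_sin_div_le one_pos hT)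
    _ = 3 := by norm_num

end Real

open Complex

theorem stmt19 :
    ∃ c : ℝ, 0 < c ∧ ∀ t : ℝ, 1 ≤ t →
      ‖∫ ω in (-1 : ℝ)..1, ((Real.log |ω| : ℝ) : ℂ) *
          Complex.exp (-Complex.I * (ω : ℂ) * (t : ℂ))‖ ≤ c / t := by
  refine ⟨6, by norm_num, fun t ht ↦ ?_⟩
  have ht₀ : 0 < t := by linarith
  have hlog : IntervalIntegrable (fun ω : ℝ ↦ (Real.log ω : ℂ)) volume (-1) 1 :=
    ⟨intervalIntegrable_log'.1.ofReal, intervalIntegrable_log'.2.ofReal⟩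
  have heven : ∀ ω : ℝ, (Real.log ω : ℂ) * exp (-I * ω * t)
      + (Real.log (-ω) : ℂ) * exp (-I * ↑(-ω) * t)
      = ((2 * (Real.log ω * Real.cos (ω * t)) : ℝ) : ℂ) := fun ω ↦ by
    rw [Real.log_neg_eq_log, ← mul_add]
    push_cast
    rw [mul_left_comm, two_cos, add_comm]
    congr 3 <;> ring
  simp_rw [Real.log_abs]
  rw [integral_neg_self_eq_integral_add_comp_neg (hlog.mul_continuousOn (by fun_prop)),
    integral_congr fun ω _ ↦ heven ω, intervalIntegral.integral_ofReal, norm_real,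
    intervalIntegral.integral_const_mul, le_div_iff₀ ht₀]
  calc ‖2 * ∫ ω in (0 : ℝ)..1, Real.log ω * Real.cos (ω * t)‖ * t
      = 2 * |t * ∫ ω in (0 : ℝ)..1, Real.log ω * Real.cos (ω * t)| := by
        rw [norm_mul, Real.norm_two, Real.norm_eq_abs, abs_mul, abs_of_pos ht₀]
        ring
    _ = 2 * |∫ u in (0 : ℝ)..t, Real.sinc u| := by
        rw [Real.mul_integral_log_mul_cos_eq_neg_integral_sinc, abs_neg]
    _ ≤ 2 * 3 := by gcongr; exact Real.abs_integral_sinc_le_three ht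
    _ = 6 := by norm_num
end
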